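/- arXiv:1704.05925 — 5 statements merged into one kernel-verified Lean document; each statement's English description precedes it below -/
import Mathlib

section
/- In a distributive nearlattice, m^{n+1}(a₀,…,a_{n+1},b) ≤ m^n(a₀,…,a_n,b) for all elements a₀,…,a_{n+1},b. -/
/-!
Read `m x y z` as `(x ∨ z) ∧ (y ∨ z)` computed in the upset `[z)`. Every `mⁿ(a₀,…,aₙ,b)` has the
form `m x y b`, so it lies above `b`; and `mⁿ⁺¹ = m p aₙ₊₁ b` with `p = mⁿ(…)`, which is below
`p ∨ b = p`.
-/

variable {A : Type*}

/-- Induced join: `x ∨ y := m x x y`. -/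
def sup (m : A → A → A → A) (x y : A) : A := m x x y

/-- Induced order: `x ≤ y` iff `m x x y = y`. -/
def le (m : A → A → A → A) (x y : A) : Prop := m x x y = y

/-- Nearlattice identities (P1) and (P2). -/
def IsNearlattice (m : A → A → A → A) : Prop :=
  (∀ x y, m x y x = x) ∧
  (∀ x y z u w, m (m x y z) (m y (m u x z) z) w = m w w (m y (m x u z) z))

/-- Identity (P3). -/
def P3 (m : A → A → A → A) : Prop :=
  ∀ x y z w, m x (m y y z) w = m (m x y w) (m x y w) (m x z w)

/-- Identity (P4). -/
def P4 (m : A → A → A → A) : Prop :=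
  ∀ x y z w, m x x (m y z w) = m (m x x y) (m x x z) w

/-- Distributive nearlattice: (P1)-(P3). -/
def IsDN (m : A → A → A → A) : Prop := IsNearlattice m ∧ P3 m

/-- `z` is the meet (greatest lower bound) of `x` and `y` in `A`. -/
def IsMeet (m : A → A → A → A) (x y z : A) : Prop :=
  le m z x ∧ le m z y ∧ ∀ w, le m w x → le m w y → le m w z

/-- `z` is the meet of `x` and `y` computed inside the principal upset `[a)`. -/
def IsMeetIn (m : A → A → A → A) (a x y z : A) : Prop :=
  le m a z ∧ le m z x ∧ le m z y ∧
    ∀ w, le m a w → le m w x → le m w y → le m w z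

/-- `a` is the greatest lower bound of the set `s`. -/
def IsInfSet (m : A → A → A → A) (s : Set A) (a : A) : Prop :=
  (∀ b ∈ s, le m a b) ∧ ∀ c, (∀ b ∈ s, le m c b) → le m c a

/-- A filter of a nearlattice: a nonempty up-set closed under existing binary meets. -/
def IsFilter (m : A → A → A → A) (F : Set A) : Prop :=
  F.Nonempty ∧ (∀ x y, x ∈ F → le m x y → y ∈ F) ∧
    (∀ x y z, x ∈ F → y ∈ F → IsMeet m x y z → z ∈ F)

/-- `mN m [a₀,…,aₙ] b = mⁿ(a₀,…,aₙ,b)`, with `mN m [] b = b`. -/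
def mN (m : A → A → A → A) : List A → A → A
  | [], b => b
  | a :: t, b => t.foldl (fun acc x => m acc x b) (m a a b)

namespace IsNearlattice

variable {m : A → A → A → A}

theorem sup_comm (h : IsNearlattice m) (x y : A) : m x x y = m y y x := by
  simpa only [h.1] using h.2 x x x x y

theorem m_snd_eq_thd (h : IsNearlattice m) (x y : A) : m y x x = x := by
  have h₁ := h.2 y x x x (m y x x)
  have h₂ := h.2 x y x x x
  simp only [h.1] at h₁ h₂
  calc m y x x = m (m y x x) (m y x x) x := h₁
    _ = m x x (m y x x) := h.sup_comm _ _
    _ = x := h₂.symm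

theorem le_m (h : IsNearlattice m) (x y z : A) : le m z (m x y z) := by
  have key := h.2 x y z z (m x y z)
  simp only [h.1 z x, h.m_snd_eq_thd, h.1] at key
  exact (h.sup_comm _ _).symm.trans key.symm

theorem m_m_thd (h : IsNearlattice m) (x y z w : A) : m (m x y z) z w = m w w z := by
  simpa only [h.1 z x, h.m_snd_eq_thd] using h.2 x y z z w

theorem m_sup_snd (h : IsNearlattice m) (h₃ : P3 m) (x y z : A) :
    m y (m x x z) z = m y x z := by
  rw [h₃, h.m_snd_eq_thd, h.sup_comm]
  exact h.le_m y x z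

theorem le_antisymm (h : IsNearlattice m) {x y : A} (hxy : le m x y) (hyx : le m y x) :
    x = y :=
  hyx.symm.trans ((h.sup_comm y x).trans hxy)

theorem m_swap_le (h : IsNearlattice m) (h₃ : P3 m) (x y z : A) :
    le m (m y x z) (m x y z) := by
  have key := h.2 x y z x (m x y z)
  rw [h.1, h.m_sup_snd h₃] at key
  exact (h.sup_comm _ _).trans key.symm

theorem m_comm (h : IsNearlattice m) (h₃ : P3 m) (x y z : A) : m x y z = m y x z :=
  h.le_antisymm (h.m_swap_le h₃ y x z) (h.m_swap_le h₃ x y z)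

theorem m_le_sup (h : IsNearlattice m) (h₃ : P3 m) (x y w : A) : le m (m x y w) (m x x w) := by
  -- (P3) at `(x, y, x, w)`; its left side `m x (y ∨ x) w` collapses to `x ∨ w`
  unfold le
  rw [← h₃, h.m_comm h₃, h.m_m_thd, h.sup_comm]

theorem m_le_of_le (h : IsNearlattice m) (h₃ : P3 m) {p b : A} (hbp : le m b p) (c : A) :
    le m (m p c b) p := by
  have hp : m p p b = p := (h.sup_comm p b).trans hbp
  simpa only [hp] using h.m_le_sup h₃ p c b

end IsNearlattice

theorem mN_append_singleton (m : A → A → A → A) {l : List A} (hl : l ≠ []) (c b : A) :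
    mN m (l ++ [c]) b = m (mN m l b) c b := by
  obtain ⟨a, t, rfl⟩ := List.exists_cons_of_ne_nil hl
  simp only [List.cons_append, mN, List.foldl_append, List.foldl_cons, List.foldl_nil]

theorem IsNearlattice.le_mN {m : A → A → A → A} (h : IsNearlattice m) {l : List A}
    (hl : l ≠ []) (b : A) : le m b (mN m l b) := by
  obtain rfl | ⟨l', c, rfl⟩ := l.eq_nil_or_concat'
  · exact absurd rfl hl
  obtain rfl | hl' := eq_or_ne l' []
  · exact h.le_m c c b
  · rw [mN_append_singleton m hl']
    exact h.le_m _ c b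

/-- In a distributive nearlattice, `mⁿ⁺¹(a₀,…,aₙ₊₁,b) ≤ mⁿ(a₀,…,aₙ,b)`. -/
theorem stmt8 (m : A → A → A → A) (h : IsDN m) (l : List A) (hl : l ≠ [])
    (c b : A) :
    le m (mN m (l ++ [c]) b) (mN m l b) := by
  obtain ⟨hN, h₃⟩ := h
  rw [mN_append_singleton m hl]
  exact hN.m_le_of_le h₃ (hN.le_mN hl b) c
end

section
/- In a distributive nearlattice, m^n(a₀,…,a_n,b) = m^n(a_{σ(0)},…,a_{σ(n)},b) for every permutation σ of {0,1,…,n}. -/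
variable {A : Type*}

section Aux

variable (m : A → A → A → A)

/-- C1: commutativity of the induced join. -/
lemma dn_c1 (h : IsDN m) (a w : A) : m a a w = m w w a := by
  have := h.1.2 a a a a w
  simpa [h.1.1] using this

/-- C2: `m a c c = c`. -/
lemma dn_c2 (h : IsDN m) (a c : A) : m a c c = c := by
  have hP1 := h.1.1
  have hP2 := h.1.2
  have e1 : ∀ x w, m (m x c c) c w = m w w c := by
    intro x w
    have := hP2 x c c c w
    simpa [hP1] using this
  have e3 : ∀ w, m c (m a c c) w = m w w (m a c c) := by
    intro w
    have := hP2 c a c c w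
    simpa [hP1] using this
  have h1 := e1 a (m a c c)
  rw [hP1] at h1
  have h2 : m c c (m a c c) = c := by
    have := e3 c
    rw [hP1] at this
    exact this.symm
  calc m a c c = m (m a c c) (m a c c) c := h1
    _ = m c c (m a c c) := dn_c1 m h _ _
    _ = c := h2

/-- E10: `m (m x y z) z w = m w w z`. -/
lemma dn_e10 (h : IsDN m) (x y z w : A) : m (m x y z) z w = m w w z := by
  have := h.1.2 x y z z w
  simpa [h.1.1, dn_c2 m h] using this

/-- C3: `m x y z` is above `z`. -/
lemma dn_c3 (h : IsDN m) (x y z : A) : m (m x y z) (m x y z) z = m x y z := by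
  have := dn_e10 m h x y z (m x y z)
  rw [h.1.1] at this
  exact this.symm

lemma dn_c3' (h : IsDN m) (x y z : A) : m z z (m x y z) = m x y z := by
  rw [dn_c1 m h]; exact dn_c3 m h x y z

/-- E11: absorption in the middle argument. -/
lemma dn_e11 (h : IsDN m) (x y w : A) : m x (m y y w) w = m x y w := by
  have := h.2 x y w w
  rw [dn_c2 m h] at this
  rw [this]
  exact dn_c3 m h x y w

/-- C4: commutativity in the first two arguments. -/
lemma dn_c4 (h : IsDN m) (x y z : A) : m x y z = m y x z := by
  have e5 : ∀ a b w, m (m a b z) (m b a z) w = m w w (m b a z) := by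
    intro a b w
    have := h.1.2 a b z a w
    simpa [dn_e11 m h] using this
  have h1 := e5 x y (m x y z)
  rw [h.1.1] at h1
  have h2 := e5 y x (m y x z)
  rw [h.1.1] at h2
  calc m x y z = m (m x y z) (m x y z) (m y x z) := h1
    _ = m (m y x z) (m y x z) (m x y z) := dn_c1 m h _ _
    _ = m y x z := h2.symm

/-- E12: absorption in the first argument. -/
lemma dn_e12 (h : IsDN m) (x y w : A) : m (m x x w) y w = m x y w := by
  rw [dn_c4 m h, dn_e11 m h, dn_c4 m h]

/-- E10': variant of E10. -/
lemma dn_e10' (h : IsDN m) (x y z w : A) : m z (m x y z) w = m w w z := by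
  rw [dn_c4 m h]; exact dn_e10 m h x y z w

/-- E30: `m a (a ∨ b) w = w ∨ a`. -/
lemma dn_e30 (h : IsDN m) (a b w : A) : m a (m a a b) w = m w w a := by
  have h1 : m b (m a a b) a = m a a b := dn_e10' m h a a b a
  have h2 : m a (m b (m a a b) a) w = m w w a := dn_e10' m h b (m a a b) a w
  rw [h1] at h2
  exact h2

/-- M2: `m x y z ≤ x ∨ z`. -/
lemma dn_m2 (h : IsDN m) (x y z : A) :
    m (m x y z) (m x y z) (m x x z) = m x x z := by
  have h1 := h.2 x x y z
  have h2 := dn_e30 m h x y z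
  rw [h2] at h1
  rw [dn_c1 m h, ← h1]
  exact dn_c1 m h z x

/-- M2': `m x y z ≤ y ∨ z`. -/
lemma dn_m2' (h : IsDN m) (x y z : A) :
    m (m x y z) (m x y z) (m y y z) = m y y z := by
  rw [dn_c4 m h x y z]; exact dn_m2 m h y x z

/-- Monotonicity in the middle argument. -/
lemma dn_mono (h : IsDN m) (a w : A) {z t : A} (hzt : m z z t = t) :
    m (m a z w) (m a z w) (m a t w) = m a t w := by
  have := h.2 a z t w
  rw [hzt] at this
  exact this.symm

/-- Monotonicity in the first argument. -/
lemma dn_mono' (h : IsDN m) (c w : A) {a a' : A} (haa : m a a a' = a') :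
    m (m a c w) (m a c w) (m a' c w) = m a' c w := by
  rw [dn_c4 m h a c w, dn_c4 m h a' c w]
  exact dn_mono m h c w haa

/-- E23: if `z ≤ q` then `m A z q = q`. -/
lemma dn_absorb (h : IsDN m) (a : A) {z q : A} (hzq : m z z q = q) :
    m a z q = q := by
  have h1 : m (m a z q) (m a z q) q = q := by
    have := dn_mono m h a q hzq
    rwa [dn_c2 m h] at this
  calc m a z q = m q q (m a z q) := (dn_c3' m h a z q).symm
    _ = m (m a z q) (m a z q) q := dn_c1 m h _ _
    _ = q := h1

/-- Transitivity of the induced order. -/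
lemma dn_trans (h : IsDN m) {a b c : A} (hab : m a a b = b) (hbc : m b b c = c) :
    m a a c = c := by
  have h1 : m (m a a c) (m a a c) c = c := by
    have h2 := dn_mono m h a c hab
    rwa [dn_absorb m h a hbc] at h2
  calc m a a c = m c c (m a a c) := (dn_c3' m h a a c).symm
    _ = m (m a a c) (m a a c) c := dn_c1 m h _ _
    _ = c := h1

/-- The meet property M3: if `z ≤ w`, `w ≤ x ∨ z`, `w ≤ y ∨ z` then `w ≤ m x y z`. -/
lemma dn_m3 (h : IsDN m) {x y z w : A} (hzw : m z z w = w)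
    (hx : m w w (m x x z) = m x x z) (hy : m w w (m y y z) = m y y z) :
    m w w (m x y z) = m x y z := by
  have hw : m w w z = w := by rw [dn_c1 m h]; exact hzw
  have s1 := dn_mono' m h w z hx
  have s2 := dn_mono m h (m x x z) z hy
  have s3 : m (m x x z) (m y y z) z = m x y z := by
    rw [dn_e12 m h, dn_e11 m h]
  rw [hw] at s1
  rw [s3] at s2
  exact dn_trans m h s1 s2

/-- Associativity of the relative meet. -/
lemma dn_assoc (h : IsDN m) (u x y b : A) :
    m (m u x b) y b = m u (m x y b) b := by
  have hbL : m b b (m (m u x b) y b) = m (m u x b) y b := dn_c3' m h _ _ _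
  have hbR : m b b (m u (m x y b) b) = m u (m x y b) b := dn_c3' m h _ _ _
  have hqq : m (m u x b) (m u x b) b = m u x b := dn_c3 m h u x b
  have hrr : m (m x y b) (m x y b) b = m x y b := dn_c3 m h x y b
  have hLq : m (m (m u x b) y b) (m (m u x b) y b) (m u x b) = m u x b := by
    have := dn_m2 m h (m u x b) y b
    rwa [hqq] at this
  have hLy := dn_m2' m h (m u x b) y b
  have hqu := dn_m2 m h u x b
  have hqx := dn_m2' m h u x b
  have hrx := dn_m2 m h x y b
  have hry := dn_m2' m h x y b
  have hRr : m (m u (m x y b) b) (m u (m x y b) b) (m x y b) = m x y b := by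
    have := dn_m2' m h u (m x y b) b
    rwa [hrr] at this
  have hRu := dn_m2 m h u (m x y b) b
  have hRx := dn_trans m h hRr hrx
  have hRy := dn_trans m h hRr hry
  have hRq : m (m u (m x y b) b) (m u (m x y b) b) (m u x b) = m u x b :=
    dn_m3 m h hbR hRu hRx
  have hRL : m (m u (m x y b) b) (m u (m x y b) b) (m (m u x b) y b)
      = m (m u x b) y b := by
    refine dn_m3 m h hbR ?_ hRy
    rw [hqq]; exact hRq
  have hLu := dn_trans m h hLq hqu
  have hLx := dn_trans m h hLq hqx
  have hLr : m (m (m u x b) y b) (m (m u x b) y b) (m x y b) = m x y b :=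
    dn_m3 m h hbL hLx hLy
  have hLR : m (m (m u x b) y b) (m (m u x b) y b) (m u (m x y b) b)
      = m u (m x y b) b := by
    refine dn_m3 m h hbL hLu ?_
    rw [hrr]; exact hLr
  calc m (m u x b) y b
      = m (m u (m x y b) b) (m u (m x y b) b) (m (m u x b) y b) := hRL.symm
    _ = m (m (m u x b) y b) (m (m u x b) y b) (m u (m x y b) b) := dn_c1 m h _ _
    _ = m u (m x y b) b := hLR

/-- Swapping the first two list entries. -/
lemma dn_swap01 (h : IsDN m) (a x b : A) :
    m (m a a b) x b = m (m x x b) a b := by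
  rw [dn_e12 m h, dn_e12 m h, dn_c4 m h]

/-- Swapping the two most recent fold entries. -/
lemma dn_swapmid (h : IsDN m) (u x y b : A) :
    m (m u x b) y b = m (m u y b) x b := by
  rw [dn_assoc m h, dn_assoc m h, dn_c4 m h x y b]

lemma dn_foldl_perm (h : IsDN m) (b : A) {t t' : List A} (hp : t.Perm t') :
    ∀ init : A, t.foldl (fun acc x => m acc x b) init
      = t'.foldl (fun acc x => m acc x b) init := by
  induction hp with
  | nil => intro init; rfl
  | cons x p ih =>
      intro init
      simp only [List.foldl_cons]
      exact ih _
  | swap x y l =>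
      intro init
      simp only [List.foldl_cons]
      rw [dn_swapmid m h]
  | trans p1 p2 ih1 ih2 =>
      intro init
      exact (ih1 init).trans (ih2 init)

end Aux

/-- In a distributive nearlattice, `mⁿ(a₀,…,aₙ,b)` is invariant under permutations
of `a₀,…,aₙ`. -/
theorem stmt9 (m : A → A → A → A) (h : IsDN m) (l l' : List A) (hp : l.Perm l')
    (b : A) :
    mN m l b = mN m l' b := by
  induction hp with
  | nil => rfl
  | cons x p ih =>
      simp only [mN]
      exact dn_foldl_perm m h b p _
  | swap x y l =>
      simp only [mN, List.foldl_cons]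
      rw [dn_swap01 m h]
  | trans p1 p2 ih1 ih2 =>
      exact ih1.trans ih2
end

section
/- Let A be a distributive nearlattice and a, a₀, …, a_n ∈ A. Then a belongs to the filter generated by {a₀,…,a_n} if and only if a = m^n(a₀,…,a_n,a). -/
variable {A : Type*}

/-! With `x ≤ y ↔ m x x y = y`, the element `mN m [a₀,…,aₙ] b` is the meet of the joins
`aᵢ ∨ b` inside `[b)`, and by distributivity `w ∨ -` commutes with it. So the fixed points of
`b ↦ mN m l b` form a filter containing each `aᵢ`, while every filter containing the `aᵢ`
contains each `aᵢ ∨ b` and hence, by closure under meets, `mN m l b`. -/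

namespace IsDN

variable {m : A → A → A → A}

theorem m_self_left (hd : IsDN m) (x y : A) : m x y x = x := hd.1.1 x y

theorem le_refl (hd : IsDN m) (x : A) : le m x x := hd.m_self_left x x

theorem sup_comm (hd : IsDN m) (x y : A) : m x x y = m y y x := by
  simpa only [hd.m_self_left] using hd.1.2 x x x x y

theorem m_self_right (hd : IsDN m) (x z : A) : m x z z = z := by
  have absorb : m z z (m x z z) = z := by
    simpa only [hd.m_self_left] using (hd.1.2 z x z z z).symm
  have h := hd.1.2 x z z x (m x z z)
  simp only [hd.m_self_left] at h
  rw [h, hd.sup_comm, absorb]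

theorem m_m_self_mid (hd : IsDN m) (x y z w : A) : m (m x y z) z w = m w w z := by
  simpa only [hd.m_self_left, hd.m_self_right] using hd.1.2 x y z z w

theorem le_m (hd : IsDN m) (x y z : A) : le m z (m x y z) := by
  have h := hd.m_m_self_mid x y z (m x y z)
  rw [hd.m_self_left, hd.sup_comm (m x y z)] at h
  exact h.symm

theorem le_sup_left (hd : IsDN m) (x y : A) : le m x (m x x y) := by
  unfold le; rw [hd.sup_comm x y]; exact hd.le_m y y x

theorem le_sup_right (hd : IsDN m) (x y : A) : le m y (m x x y) := hd.le_m x x y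

theorem m_sup_mid (hd : IsDN m) (x y z : A) : m x (m y y z) z = m x y z := by
  rw [hd.2, hd.m_self_right, hd.sup_comm]; exact hd.le_m x y z

theorem m_comm (hd : IsDN m) (x y z : A) : m x y z = m y x z := by
  have key : ∀ a b : A, m a b z = m (m a b z) (m a b z) (m b a z) := fun a b => by
    simpa only [hd.m_self_left, hd.m_sup_mid] using hd.1.2 a b z a (m a b z)
  rw [key x y, hd.sup_comm, ← key y x]

theorem m_eq_of_le_mid (hd : IsDN m) {q w : A} (hq : le m q w) (x : A) : m x q w = w := by
  rw [← hd.m_sup_mid, show m q q w = w from hq, hd.m_self_right]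

theorem sup_le (hd : IsDN m) {x y w : A} (hx : le m x w) (hy : le m y w) :
    le m (m x x y) w := by
  have h := hd.2 (m x x y) x y w
  rw [hd.m_eq_of_le_mid hx, hd.m_eq_of_le_mid hy, hd.m_self_left] at h
  exact h

theorem le_trans (hd : IsDN m) {x y z : A} (hxy : le m x y) (hyz : le m y z) : le m x z := by
  have hxyz : m x y z = z := hd.m_eq_of_le_mid hyz x
  have h := hd.2 x x y z
  rw [show m x x y = y from hxy, hxyz, hd.sup_comm (m x x z) z] at h
  exact (h.trans (hd.le_m x x z)).symm

theorem le_antisymm (hd : IsDN m) {x y : A} (hxy : le m x y) (hyx : le m y x) : x = y :=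
  calc x = m y y x := hyx.symm
    _ = m x x y := hd.sup_comm y x
    _ = y := hxy

theorem m_le_sup_left (hd : IsDN m) (x y z : A) : le m (m x y z) (m x x z) :=
  calc m (m x y z) (m x y z) (m x x z) = m x (m y y x) z := (hd.2 x y x z).symm
    _ = m (m y y x) x z := hd.m_comm _ _ _
    _ = m z z x := hd.m_m_self_mid y y x z
    _ = m x x z := hd.sup_comm z x

theorem m_le_sup_right (hd : IsDN m) (x y z : A) : le m (m x y z) (m y y z) := by
  rw [hd.m_comm x y z]; exact hd.m_le_sup_left y x z

theorem m_mono_mid (hd : IsDN m) {w y z : A} (hw : le m w (m y y z)) (x : A) :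
    le m (m x w z) (m x y z) := by
  have h := hd.2 x w (m y y z) z
  rw [show m w w (m y y z) = m y y z from hw, hd.m_sup_mid] at h
  exact h.symm

theorem m_mono_left (hd : IsDN m) {w x z : A} (hw : le m w (m x x z)) (y : A) :
    le m (m w y z) (m x y z) := by
  rw [hd.m_comm w y z, hd.m_comm x y z]; exact hd.m_mono_mid hw y

theorem le_m_of_le (hd : IsDN m) {w x y z : A} (hzw : le m z w)
    (hx : le m w (m x x z)) (hy : le m w (m y y z)) : le m w (m x y z) := by
  have hw : m w w z = w := by rw [hd.sup_comm]; exact hzw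
  have h := hd.m_mono_left hx w
  rw [hw] at h
  exact hd.le_trans h (hd.m_mono_mid hy x)

theorem isMeet_m (hd : IsDN m) {u v z : A} (hu : le m z u) (hv : le m z v) :
    IsMeet m u v (m u v z) := by
  have hu' : m u u z = u := by rw [hd.sup_comm]; exact hu
  have hv' : m v v z = v := by rw [hd.sup_comm]; exact hv
  refine ⟨?_, ?_, fun w hwu hwv => ?_⟩
  · simpa only [hu'] using hd.m_le_sup_left u v z
  · simpa only [hv'] using hd.m_le_sup_right u v z
  · -- `z ∨ w` lies in `[z)` and below `u` and `v`, where `m u v z` is the meet.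
    have hw : le m (m z z w) (m u v z) := by
      refine hd.le_m_of_le (hd.le_sup_left z w) ?_ ?_
      · rw [hu']; exact hd.sup_le hu hwu
      · rw [hv']; exact hd.sup_le hv hwv
    exact hd.le_trans (hd.le_sup_right z w) hw

theorem m_eq_of_le_base (hd : IsDN m) {u v z z' : A} (hzu : le m z u) (hzv : le m z v)
    (hz'u : le m z' u) (hz'v : le m z' v) : m u v z = m u v z' := by
  have M := hd.isMeet_m hzu hzv
  have M' := hd.isMeet_m hz'u hz'v
  exact hd.le_antisymm (M'.2.2 _ M.1 M.2.1) (M.2.2 _ M'.1 M'.2.1)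

theorem sup_le_sup_right (hd : IsDN m) {a b : A} (hab : le m a b) (c : A) :
    le m (m a a c) (m b b c) :=
  hd.sup_le (hd.le_trans hab (hd.le_sup_left b c)) (hd.le_sup_right b c)

theorem sup_le_sup_left (hd : IsDN m) {b c : A} (hbc : le m b c) (a : A) :
    le m (m a a b) (m a a c) :=
  hd.sup_le (hd.le_sup_left a c) (hd.le_trans hbc (hd.le_sup_right a c))

theorem sup_assoc (hd : IsDN m) (x y z : A) :
    m (m x x y) (m x x y) z = m x x (m y y z) := by
  apply hd.le_antisymm
  · refine hd.sup_le (hd.sup_le (hd.le_sup_left x _) ?_) ?_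
    · exact hd.le_trans (hd.le_sup_left y z) (hd.le_sup_right x _)
    · exact hd.le_trans (hd.le_sup_right y z) (hd.le_sup_right x _)
  · refine hd.sup_le (hd.le_trans (hd.le_sup_left x y) (hd.le_sup_left _ z)) ?_
    exact hd.sup_le (hd.le_trans (hd.le_sup_right x y) (hd.le_sup_left _ z))
      (hd.le_sup_right _ z)

theorem sup_left_comm (hd : IsDN m) (x y z : A) : m x x (m y y z) = m y y (m x x z) := by
  rw [← hd.sup_assoc, hd.sup_comm x y, hd.sup_assoc]

theorem m_sup_self_left (hd : IsDN m) (x y w : A) : m (m x x y) x w = m x x w :=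
  hd.le_antisymm (hd.m_le_sup_right _ x w)
    (hd.le_m_of_le (hd.le_sup_right x w) (hd.sup_le_sup_right (hd.le_sup_left x y) w)
      (hd.le_refl _))

theorem p4 (hd : IsDN m) : P4 m := by
  intro x y z w
  have hzx : m (m x x w) (m x x w) (m z x w) = m x x w := by
    rw [hd.sup_comm]; exact hd.m_le_sup_right z x w
  symm
  calc m (m x x y) (m x x z) w
      = m (m (m x x y) x w) (m (m x x y) x w) (m (m x x y) z w) := hd.2 _ _ _ _
    _ = m (m x x w) (m x x w) (m z (m x x y) w) := by rw [hd.m_sup_self_left, hd.m_comm _ z]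
    _ = m (m (m x x w) (m x x w) (m z x w)) (m (m x x w) (m x x w) (m z x w)) (m z y w) := by
        rw [hd.2 z x y w, ← hd.sup_assoc]
    _ = m x x (m w w (m z y w)) := by rw [hzx, hd.sup_assoc]
    _ = m x x (m y z w) := by rw [show m w w (m z y w) = m z y w from hd.le_m z y w, hd.m_comm z]

theorem sup_m_of_le (hd : IsDN m) {b acc : A} (hba : le m b acc) (w c : A) :
    m w w (m acc c b) = m (m w w acc) c (m w w b) := by
  have hb : le m b (m w w acc) := hd.le_trans hba (hd.le_sup_right w acc)
  have hwb : le m (m w w b) (m w w acc) := hd.sup_le_sup_left hba w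
  have hb' : le m b (m c c (m w w b)) :=
    hd.le_trans (hd.le_sup_right w b) (hd.le_sup_right c _)
  have hwb' : le m (m w w b) (m c c (m w w b)) := hd.le_sup_right c _
  calc m w w (m acc c b) = m (m w w acc) (m w w c) b := hd.p4 w acc c b
    _ = m (m w w acc) (m c c (m w w b)) b := by
        rw [← hd.m_sup_mid _ (m w w c), hd.sup_assoc, hd.sup_left_comm]
    _ = m (m w w acc) (m c c (m w w b)) (m w w b) := hd.m_eq_of_le_base hb hb' hwb hwb'
    _ = m (m w w acc) c (m w w b) := hd.m_sup_mid _ _ _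

theorem le_foldl (hd : IsDN m) {b acc : A} (hb : le m b acc) (t : List A) :
    le m b (t.foldl (fun acc x => m acc x b) acc) := by
  induction t generalizing acc with
  | nil => exact hb
  | cons c t ih => exact ih (hd.le_m acc c b)

theorem foldl_le (hd : IsDN m) {b acc : A} (hb : le m b acc) (t : List A) :
    le m (t.foldl (fun acc x => m acc x b) acc) acc := by
  induction t generalizing acc with
  | nil => exact hd.le_refl acc
  | cons c t ih =>
    have hstep : le m (m acc c b) acc := by
      simpa only [hd.sup_comm acc, show m b b acc = acc from hb] using hd.m_le_sup_left acc c b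
    exact hd.le_trans (ih (hd.le_m acc c b)) hstep

theorem foldl_le_sup (hd : IsDN m) {b acc c : A} (hb : le m b acc) {t : List A} (hc : c ∈ t) :
    le m (t.foldl (fun acc x => m acc x b) acc) (m c c b) := by
  induction t generalizing acc with
  | nil => exact absurd hc List.not_mem_nil
  | cons c' t ih =>
    rcases List.mem_cons.mp hc with rfl | hc
    · exact hd.le_trans (hd.foldl_le (hd.le_m acc c b) t) (hd.m_le_sup_right acc c b)
    · exact ih (hd.le_m acc c' b) hc

theorem sup_foldl (hd : IsDN m) {b acc : A} (hb : le m b acc) (w : A) (t : List A) :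
    m w w (t.foldl (fun acc x => m acc x b) acc) =
      t.foldl (fun acc x => m acc x (m w w b)) (m w w acc) := by
  induction t generalizing acc with
  | nil => rfl
  | cons c t ih =>
    simp only [List.foldl_cons]
    rw [ih (hd.le_m acc c b), hd.sup_m_of_le hb]

theorem foldl_mem (hd : IsDN m) {F : Set A} (hF : IsFilter m F) {b acc : A} (hb : le m b acc)
    (hacc : acc ∈ F) {t : List A} (ht : ∀ c ∈ t, c ∈ F) :
    t.foldl (fun acc x => m acc x b) acc ∈ F := by
  induction t generalizing acc with
  | nil => exact hacc
  | cons c t ih =>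
    have hcb : m c c b ∈ F := hF.2.1 c _ (ht c List.mem_cons_self) (hd.le_sup_left c b)
    have hmeet : IsMeet m acc (m c c b) (m acc c b) := by
      simpa only [hd.m_sup_mid] using hd.isMeet_m hb (hd.le_sup_right c b)
    exact ih (hd.le_m acc c b) (hF.2.2 _ _ _ hacc hcb hmeet)
      fun c' hc' => ht c' (List.mem_cons_of_mem c hc')

theorem sup_mN (hd : IsDN m) (w b : A) (l : List A) : m w w (mN m l b) = mN m l (m w w b) := by
  cases l with
  | nil => rfl
  | cons a t =>
    simp only [mN]
    rw [hd.sup_foldl (hd.le_sup_right a b), hd.sup_left_comm]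

theorem le_mN (hd : IsDN m) (b : A) (l : List A) : le m b (mN m l b) := by
  cases l with
  | nil => exact hd.le_refl b
  | cons a t => exact hd.le_foldl (hd.le_sup_right a b) t

theorem mN_le_sup (hd : IsDN m) {c : A} {l : List A} (hc : c ∈ l) (b : A) :
    le m (mN m l b) (m c c b) := by
  cases l with
  | nil => exact absurd hc List.not_mem_nil
  | cons a t =>
    rcases List.mem_cons.mp hc with rfl | hc
    · exact hd.foldl_le (hd.le_sup_right c b) t
    · exact hd.foldl_le_sup (hd.le_sup_right a b) hc

theorem mN_mono (hd : IsDN m) (l : List A) {z u : A} (h : le m z u) :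
    le m (mN m l z) (mN m l u) := by
  have hu : m u u (mN m l z) = mN m l u := by
    rw [hd.sup_mN, hd.sup_comm, show m z z u = u from h]
  exact hu ▸ hd.le_sup_right u _

theorem eq_mN_of_mem (hd : IsDN m) {x : A} {l : List A} (hx : x ∈ l) : x = mN m l x :=
  hd.le_antisymm (hd.le_mN x l) (by simpa only [hd.m_self_left] using hd.mN_le_sup hx x)

theorem isFilter_setOf_eq_mN (hd : IsDN m) {l : List A} (hl : l ≠ []) :
    IsFilter m {x | x = mN m l x} := by
  obtain ⟨a, ha⟩ := List.exists_mem_of_ne_nil l hl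
  refine ⟨⟨a, hd.eq_mN_of_mem ha⟩, fun x y hx hxy => ?_, fun x y z hx hy hz => ?_⟩
  · have hyx : m y y x = y := by rw [hd.sup_comm]; exact hxy
    calc y = m y y x := hyx.symm
      _ = m y y (mN m l x) := congrArg (m y y) hx
      _ = mN m l y := by rw [hd.sup_mN, hyx]
  · have hx' : le m (mN m l z) x := hx ▸ hd.mN_mono l hz.1
    have hy' : le m (mN m l z) y := hy ▸ hd.mN_mono l hz.2.1
    exact hd.le_antisymm (hd.le_mN z l) (hz.2.2 _ hx' hy')

theorem mN_mem (hd : IsDN m) {F : Set A} (hF : IsFilter m F) {l : List A} (hl : l ≠ [])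
    (hlF : ∀ x ∈ l, x ∈ F) (b : A) : mN m l b ∈ F := by
  obtain ⟨a, t, rfl⟩ := List.exists_cons_of_ne_nil hl
  have hab : m a a b ∈ F := hF.2.1 a _ (hlF a List.mem_cons_self) (hd.le_sup_left a b)
  exact hd.foldl_mem hF (hd.le_sup_right a b) hab fun c hc => hlF c (List.mem_cons_of_mem a hc)

end IsDN

/-- `a` belongs to the filter generated by `{a₀,…,aₙ}` iff `a = mⁿ(a₀,…,aₙ,a)`. -/
theorem stmt10 (m : A → A → A → A) (h : IsDN m) (l : List A) (hl : l ≠ [])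
    (a : A) :
    (∀ F : Set A, IsFilter m F → (∀ x ∈ l, x ∈ F) → a ∈ F) ↔ a = mN m l a := by
  constructor
  · intro H
    exact H _ (h.isFilter_setOf_eq_mN hl) fun x hx => h.eq_mN_of_mem hx
  · intro ha F hF hlF
    rw [ha]
    exact h.mN_mem hF hl hlF a
end

section
/- In a □-modal distributive nearlattice, □ preserves the ternary operation applied with existing meets: for a, b ∈ A such that a ∧ b exists, □(a ∧ b) = □a ∧ □b and in particular □a ∧ □b exists. -/
variable {A : Type*}

/-- In a □-modal distributive nearlattice, if `a ∧ b` exists then `□a ∧ □b` exists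
and equals `□(a ∧ b)`. -/
theorem stmt15 (m : A → A → A → A) (box : A → A) (one : A) (h : IsDN m)
    (htop : ∀ a, le m a one) (hone : box one = one)
    (hM : ∀ x y z, box (m x y z) = m (box (sup m x z)) (box (sup m y z)) (box z)) :
    ∀ a b c, IsMeet m a b c → IsMeet m (box a) (box b) (box c) := by
  obtain ⟨⟨hP1, hP2⟩, hP3⟩ := h
  have E3 : ∀ v0 v1 v2 : A, (m (m v0 v1 v1) v1 v2) = (m v2 v2 v1) := by
    intro v0 v1 v2
    have v3 : A := v0
    have h := (hP2 v0 v1 v1 v3 v2)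
    rw [(hP1 v1 (m v3 v0 v1))] at h
    rw [(hP1 v1 (m v0 v3 v1))] at h
    exact h
  have E11 : ∀ v0 v1 : A, (m v0 v0 v1) = (m v1 v1 v0) := by
    intro v0 v1
    have h := (E3 v0 v0 v1)
    rw [(hP1 v0 v0)] at h
    exact h
  have E5 : ∀ v0 v1 v2 v3 : A, (m (m v0 v1 v2) (m v1 v2 v2) v3) = (m v3 v3 (m v1 (m v0 v2 v2) v2)) := by
    intro v0 v1 v2 v3
    have h := (hP2 v0 v1 v2 v2 v3)
    rw [(hP1 v2 v0)] at h
    exact h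
  have E7 : ∀ v0 v1 v2 v3 : A, (m v0 (m v1 (m v2 v0 v0) v0) v3) = (m v3 v3 (m v1 v0 v0)) := by
    intro v0 v1 v2 v3
    have h := (hP2 v0 v1 v0 v2 v3)
    rw [(hP1 v0 v1)] at h
    rw [(hP1 v0 v2)] at h
    exact h
  have E9 : ∀ v0 v1 : A, (m (m v0 v1 v1) (m v0 v1 v1) v1) = (m v0 v1 v1) := by
    intro v0 v1
    have h := (hP1 (m v0 v1 v1) v1)
    rw [(E3 v0 v1 (m v0 v1 v1))] at h
    exact h
  have E29 : ∀ v0 v1 : A, (m v0 v1 v1) = (m v1 v1 (m v0 v1 v1)) := by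
    intro v0 v1
    have h := (E11 (m v0 v1 v1) v1)
    rw [(E9 v0 v1)] at h
    exact h
  have E49 : ∀ v0 v1 : A, (m v0 v1 v1) = v1 := by
    intro v0 v1
    have v2 : A := v0
    have h := (hP1 v1 (m v0 (m v2 v1 v1) v1))
    rw [(E7 v1 v0 v2 v1)] at h
    rw [← (E29 v0 v1)] at h
    exact h
  have E335 : ∀ v0 v1 v2 v3 : A, (m (m v0 v1 v2) v2 v3) = (m v3 v3 v2) := by
    intro v0 v1 v2 v3
    have h := (hP2 v0 v1 v2 v2 v3).symm
    rw [← (E5 v0 v1 v2 v3)] at h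
    rw [(hP2 v0 v1 v2 v2 v3)] at h
    rw [(E49 v1 v2)] at h
    rw [(E49 v0 v2)] at h
    rw [(E49 v1 v2)] at h
    exact h
  have E13 : ∀ v0 v1 v2 v3 : A, (m (m v0 v1 v2) (m v0 v1 v2) v3) = (m v3 v3 (m v0 v1 v2)) := by
    intro v0 v1 v2 v3
    have h := (E3 (m v0 v1 v2) (m v0 v1 v2) v3)
    rw [← (hP3 v0 v1 v1 v2)] at h
    rw [(hP1 v1 v1)] at h
    exact h
  have E357 : ∀ v0 v1 v2 : A, (m v0 v0 (m v1 v2 v0)) = (m v1 v2 v0) := by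
    intro v0 v1 v2
    have h := (hP1 (m v1 v2 v0) v0)
    rw [(E335 v1 v2 v0 (m v1 v2 v0))] at h
    rw [(E13 v1 v2 v0 v0)] at h
    exact h
  have E55 : ∀ v0 v1 v2 : A, (m v0 v0 (m v1 v2 v0)) = (m v1 (m v0 v0 v2) v0) := by
    intro v0 v1 v2
    have h := (hP3 v1 v0 v2 v0).symm
    rw [(E49 v1 v0)] at h
    exact h
  have E53 : ∀ v0 v1 v2 : A, (m v0 v0 (m v1 v2 v0)) = (m v1 (m v2 v2 v0) v0) := by
    intro v0 v1 v2
    have h := (hP3 v1 v2 v0 v0).symm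
    rw [(E49 v1 v0)] at h
    rw [(E13 v1 v2 v0 v0)] at h
    exact h
  have E367 : ∀ v0 v1 v2 : A, (m v0 (m v1 v1 v2) v2) = (m v0 v1 v2) := by
    intro v0 v1 v2
    have v3 : A := v0
    have v4 : A := v0
    have h := (E335 v3 v4 (m v0 v1 v2) v2).symm
    rw [(E53 v2 v0 v1)] at h
    rw [(E335 v3 v4 (m v0 v1 v2) v2)] at h
    rw [(E357 v2 v0 v1)] at h
    exact h
  have E393 : ∀ v0 v1 v2 v3 : A, (m v0 (m v1 v1 v2) v3) = (m v0 (m v1 v1 (m v2 v2 v3)) v3) := by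
    intro v0 v1 v2 v3
    have h := (hP3 v0 v1 (m v2 v2 v3) v3).symm
    rw [(E367 v0 v2 v3)] at h
    rw [← (hP3 v0 v1 v2 v3)] at h
    exact h
  have E495 : ∀ v0 v1 v2 v3 v4 : A, (m v0 v1 (m v2 v3 v4)) = (m v0 (m v1 v1 v4) (m v2 v3 v4)) := by
    intro v0 v1 v2 v3 v4
    have h := (E393 v0 v1 v4 (m v2 v3 v4)).symm
    rw [(E53 v4 v2 v3)] at h
    rw [(E367 v2 v3 v4)] at h
    rw [(E367 v0 v1 (m v2 v3 v4))] at h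
    exact h
  have E337 : ∀ v0 v1 v2 : A, (m (m v0 v0 v1) v0 v2) = (m v2 v2 v0) := by
    intro v0 v1 v2
    have v3 : A := v0
    have h := (E5 (m v3 v1 v1) v1 v0 v2)
    rw [(E3 v3 v1 v0)] at h
    rw [(E49 (m v3 v1 v1) v0)] at h
    rw [(E49 v1 v0)] at h
    exact h
  have E673 : ∀ v0 v1 v2 : A, (m v0 v0 (m v0 v1 v2)) = (m v0 (m v0 v0 v1) v2) := by
    intro v0 v1 v2
    have h := (hP3 v0 v0 v1 v2).symm
    rw [← (E495 (m v0 v0 v2) v0 v0 v1 v2)] at h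
    rw [(E337 v0 v2 (m v0 v1 v2))] at h
    rw [(E13 v0 v1 v2 v0)] at h
    exact h
  have E715 : ∀ v0 v1 v2 : A, (m v0 (m v1 v1 v0) v2) = (m v0 v0 (m v0 v1 v2)) := by
    intro v0 v1 v2
    have h := (E673 v0 v1 v2).symm
    rw [(E11 v0 v1)] at h
    exact h
  have E399 : ∀ v0 v1 v2 v3 : A, (m (m v0 v1 v2) (m v1 v0 v2) v3) = (m v3 v3 (m v1 v0 v2)) := by
    intro v0 v1 v2 v3
    have h := (hP2 v0 v1 v2 v0 v3)
    rw [(E367 v1 v0 v2)] at h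
    exact h
  have E501 : ∀ v0 v1 v2 : A, (m (m v0 v1 v2) (m v0 v1 v2) (m v1 v0 v2)) = (m v0 v1 v2) := by
    intro v0 v1 v2
    have h := (hP1 (m v0 v1 v2) (m v1 v0 v2))
    rw [(E399 v0 v1 v2 (m v0 v1 v2))] at h
    rw [(E13 v0 v1 v2 (m v1 v0 v2))] at h
    rw [(E13 v1 v0 v2 (m v0 v1 v2))] at h
    rw [(E13 v0 v1 v2 (m v1 v0 v2))] at h
    rw [(E13 v1 v0 v2 (m v0 v1 v2))] at h
    rw [(E13 v0 v1 v2 (m v1 v0 v2))] at h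
    rw [(E13 v1 v0 v2 (m v0 v1 v2))] at h
    rw [(E13 v0 v1 v2 (m v1 v0 v2))] at h
    rw [(E13 v1 v0 v2 (m v0 v1 v2))] at h
    rw [(E13 v0 v1 v2 (m v1 v0 v2))] at h
    rw [(E13 v1 v0 v2 (m v0 v1 v2))] at h
    rw [(E13 v0 v1 v2 (m v1 v0 v2))] at h
    rw [(E13 v1 v0 v2 (m v0 v1 v2))] at h
    rw [(E13 v0 v1 v2 (m v1 v0 v2))] at h
    rw [(E13 v1 v0 v2 (m v0 v1 v2))] at h
    rw [(E13 v0 v1 v2 (m v1 v0 v2))] at h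
    rw [(E13 v1 v0 v2 (m v0 v1 v2))] at h
    rw [(E13 v0 v1 v2 (m v1 v0 v2))] at h
    rw [(E13 v1 v0 v2 (m v0 v1 v2))] at h
    rw [(E13 v0 v1 v2 (m v1 v0 v2))] at h
    rw [(E13 v1 v0 v2 (m v0 v1 v2))] at h
    rw [(E13 v0 v1 v2 (m v1 v0 v2))] at h
    rw [(E13 v1 v0 v2 (m v0 v1 v2))] at h
    rw [(E13 v0 v1 v2 (m v1 v0 v2))] at h
    rw [(E13 v1 v0 v2 (m v0 v1 v2))] at h
    rw [(E13 v0 v1 v2 (m v1 v0 v2))] at h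
    rw [(E13 v1 v0 v2 (m v0 v1 v2))] at h
    rw [(E13 v0 v1 v2 (m v1 v0 v2))] at h
    rw [(E13 v1 v0 v2 (m v0 v1 v2))] at h
    rw [(E13 v0 v1 v2 (m v1 v0 v2))] at h
    rw [(E13 v1 v0 v2 (m v0 v1 v2))] at h
    rw [(E13 v0 v1 v2 (m v1 v0 v2))] at h
    rw [(E13 v1 v0 v2 (m v0 v1 v2))] at h
    rw [(E13 v0 v1 v2 (m v1 v0 v2))] at h
    rw [(E13 v1 v0 v2 (m v0 v1 v2))] at h
    rw [(E13 v0 v1 v2 (m v1 v0 v2))] at h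
    rw [(E13 v1 v0 v2 (m v0 v1 v2))] at h
    rw [(E13 v0 v1 v2 (m v1 v0 v2))] at h
    rw [(E13 v1 v0 v2 (m v0 v1 v2))] at h
    rw [(E13 v0 v1 v2 (m v1 v0 v2))] at h
    rw [(E13 v1 v0 v2 (m v0 v1 v2))] at h
    rw [(E13 v0 v1 v2 (m v1 v0 v2))] at h
    rw [(E13 v1 v0 v2 (m v0 v1 v2))] at h
    rw [(E13 v0 v1 v2 (m v1 v0 v2))] at h
    rw [(E13 v1 v0 v2 (m v0 v1 v2))] at h
    rw [(E13 v0 v1 v2 (m v1 v0 v2))] at h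
    rw [(E13 v1 v0 v2 (m v0 v1 v2))] at h
    rw [(E13 v0 v1 v2 (m v1 v0 v2))] at h
    rw [(E13 v1 v0 v2 (m v0 v1 v2))] at h
    rw [(E13 v0 v1 v2 (m v1 v0 v2))] at h
    rw [(E13 v1 v0 v2 (m v0 v1 v2))] at h
    rw [(E13 v0 v1 v2 (m v1 v0 v2))] at h
    rw [(E13 v1 v0 v2 (m v0 v1 v2))] at h
    rw [(E13 v0 v1 v2 (m v1 v0 v2))] at h
    rw [(E13 v1 v0 v2 (m v0 v1 v2))] at h
    rw [(E13 v0 v1 v2 (m v1 v0 v2))] at h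
    rw [(E13 v1 v0 v2 (m v0 v1 v2))] at h
    rw [(E13 v0 v1 v2 (m v1 v0 v2))] at h
    rw [(E13 v1 v0 v2 (m v0 v1 v2))] at h
    rw [(E13 v0 v1 v2 (m v1 v0 v2))] at h
    rw [(E13 v1 v0 v2 (m v0 v1 v2))] at h
    exact h
  have E325 : ∀ v0 v1 v2 v3 v4 v5 : A, (m v0 (m (m v1 v2 v3) v3 v4) v5) = (m v0 (m v4 v4 v3) v5) := by
    intro v0 v1 v2 v3 v4 v5
    have h := (hP3 v0 v4 (m v2 (m v1 v3 v3) v3) v5)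
    rw [← (E5 v1 v2 v3 v4)] at h
    rw [← (hP3 v0 v4 (m v2 (m v1 v3 v3) v3) v5)] at h
    rw [(E49 v1 v3)] at h
    rw [(E49 v2 v3)] at h
    exact h
  have E95 : ∀ v0 v1 v2 : A, (m v0 (m v1 v1 v2) v1) = (m v0 (m v2 v2 v1) v1) := by
    intro v0 v1 v2
    have h := (E53 v1 v0 v2)
    rw [(E55 v1 v0 v2)] at h
    exact h
  have E365 : ∀ v0 v1 v2 v3 : A, (m v0 v0 v1) = (m (m v2 v3 (m v0 v0 v1)) v0 v1) := by
    intro v0 v1 v2 v3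
    have h := (E53 v1 (m v2 v3 (m v0 v0 v1)) v0).symm
    rw [(E335 v2 v3 (m v0 v0 v1) v1)] at h
    rw [(E357 v1 (m v2 v3 (m v0 v0 v1)) v0)] at h
    rw [(E357 v1 v0 v0)] at h
    exact h
  have E455 : ∀ v0 v1 v2 : A, (m (m v0 (m v1 v1 v0) v2) v0 v2) = (m v0 v0 v2) := by
    intro v0 v1 v2
    have h := (E365 v0 v2 (m v0 v1 v2) (m v0 v1 v2)).symm
    rw [← (hP3 v0 v1 v0 v2)] at h
    exact h
  have E457 : ∀ v0 v1 v2 : A, (m (m v0 (m v0 v0 v1) v2) v0 v2) = (m v0 v0 v2) := by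
    intro v0 v1 v2
    have h := (E455 v0 v1 v2)
    rw [(E11 v1 v0)] at h
    exact h
  have E469 : ∀ v0 v1 v2 v3 : A, (m (m v0 (m v1 v2 v0) v3) v0 v3) = (m v0 v0 v3) := by
    intro v0 v1 v2 v3
    have h := (E457 v0 (m v1 v2 v0) v3)
    rw [(E53 v0 v1 v2)] at h
    rw [(E367 v1 v2 v0)] at h
    exact h
  have E17 : ∀ v0 v1 v2 v3 : A, (m v0 (m v1 v1 v2) v3) = (m v0 (m v2 v2 v1) v3) := by
    intro v0 v1 v2 v3
    have h := (hP3 v0 v2 v1 v3)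
    rw [(E11 v2 v1)] at h
    rw [← (hP3 v0 v2 v1 v3)] at h
    exact h
  have E57 : ∀ v0 v1 v2 : A, (m v0 v0 v1) = (m v2 (m v1 v1 v0) (m v0 v0 v1)) := by
    intro v0 v1 v2
    have h := (E17 v2 v0 v1 (m v0 v0 v1))
    rw [(E49 v2 (m v0 v0 v1))] at h
    exact h
  have E371 : ∀ v0 v1 v2 : A, (m v0 (m v1 v1 v2) v1) = (m v0 v2 v1) := by
    intro v0 v1 v2
    have v3 : A := v0
    have v4 : A := v0
    have h := (E335 v3 v4 (m v0 v2 v1) v1).symm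
    rw [(E55 v1 v0 v2)] at h
    rw [(E335 v3 v4 (m v0 v2 v1) v1)] at h
    rw [(E357 v1 v0 v2)] at h
    exact h
  have E387 : ∀ v0 v1 v2 v3 : A, (m v0 v1 v2) = (m v3 v2 (m v0 v1 v2)) := by
    intro v0 v1 v2 v3
    have h := (E57 v2 (m v0 v1 v2) v3)
    rw [(E357 v2 v0 v1)] at h
    rw [(E371 v3 (m v0 v1 v2) v2)] at h
    exact h
  have E481 : ∀ v0 v1 v2 v3 v4 : A, (m v0 v1 (m v2 v3 v4)) = (m v4 v4 (m v0 v1 (m v2 v3 v4))) := by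
    intro v0 v1 v2 v3 v4
    have h := (E469 v4 v2 v3 (m v0 v1 (m v2 v3 v4)))
    rw [← (E387 v0 v1 (m v2 v3 v4) v4)] at h
    rw [(hP1 (m v0 v1 (m v2 v3 v4)) v4)] at h
    exact h
  have E655 : ∀ v0 v1 v2 v3 v4 : A, (m v0 (m v1 v1 v2) (m v3 v4 v1)) = (m v0 v2 (m v3 v4 v1)) := by
    intro v0 v1 v2 v3 v4
    have h := (E95 v0 (m v3 v4 v1) v2).symm
    rw [(E481 v2 v2 v3 v4 v1)] at h
    rw [(E371 v0 (m v3 v4 v1) v2)] at h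
    rw [← (E393 v0 v1 v2 (m v3 v4 v1))] at h
    exact h
  have E467 : ∀ v0 v1 v2 v3 : A, (m v0 v1 (m v2 v2 v3)) = (m v3 v3 (m v0 v1 (m v2 v2 v3))) := by
    intro v0 v1 v2 v3
    have h := (E455 v3 v2 (m v0 v1 (m v2 v2 v3)))
    rw [← (E387 v0 v1 (m v2 v2 v3) v3)] at h
    rw [(hP1 (m v0 v1 (m v2 v2 v3)) v3)] at h
    exact h
  have E563 : ∀ v0 v1 v2 v3 v4 : A, (m (m v0 v1 (m v2 v2 v3)) v3 v4) = (m v4 v4 v3) := by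
    intro v0 v1 v2 v3 v4
    have h := (E337 v3 (m v0 v1 (m v2 v2 v3)) v4)
    rw [← (E467 v0 v1 v2 v3)] at h
    exact h
  have E573 : ∀ v0 v1 v2 v3 v4 : A, (m (m v0 v1 (m v2 v2 v3)) v2 v4) = (m v4 v4 v2) := by
    intro v0 v1 v2 v3 v4
    have h := (E563 v0 v1 v3 v2 v4)
    rw [(E11 v3 v2)] at h
    exact h
  have E587 : ∀ v0 v1 v2 v3 : A, (m (m v0 (m v1 v1 v0) v2) v0 v3) = (m v3 v3 v0) := by
    intro v0 v1 v2 v3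
    have h := (E573 (m v0 v1 v2) (m v0 v1 v2) v0 v2 v3)
    rw [← (hP3 v0 v1 v0 v2)] at h
    exact h
  have E599 : ∀ v0 v1 v2 v3 : A, (m (m v0 (m v0 v0 v1) v2) v0 v3) = (m v3 v3 v0) := by
    intro v0 v1 v2 v3
    have h := (E587 v0 v1 v2 v3)
    rw [(E11 v1 v0)] at h
    exact h
  have E617 : ∀ v0 v1 v2 v3 v4 : A, (m (m v0 (m v1 v2 v0) v3) v0 v4) = (m v4 v4 v0) := by
    intro v0 v1 v2 v3 v4
    have h := (E599 v0 (m v1 v2 v0) v3 v4)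
    rw [(E53 v0 v1 v2)] at h
    rw [(E367 v1 v2 v0)] at h
    exact h
  have E625 : ∀ v0 v1 v2 v3 : A, (m v0 v0 (m v0 (m v1 v2 v0) v3)) = (m v0 (m v1 v2 v0) v3) := by
    intro v0 v1 v2 v3
    have h := (hP1 (m v0 (m v1 v2 v0) v3) v0)
    rw [(E617 v0 v1 v2 v3 (m v0 (m v1 v2 v0) v3))] at h
    rw [(E13 v0 (m v1 v2 v0) v3 v0)] at h
    exact h
  have E1109 : ∀ v0 v1 v2 v3 : A, (m v0 v0 v1) = (m v1 (m v2 v3 v1) v0) := by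
    intro v0 v1 v2 v3
    have h := (E325 (m (m v2 v3 v1) v1 v0) v2 v3 v1 v0 (m v1 (m v2 v3 v1) v0))
    rw [(E501 (m v2 v3 v1) v1 v0)] at h
    rw [(E655 (m (m v2 v3 v1) v1 v0) v0 v1 v1 (m v2 v3 v1))] at h
    rw [(E335 v2 v3 v1 v0)] at h
    rw [(E335 v0 v0 v1 (m v1 (m v2 v3 v1) v0))] at h
    rw [(E13 v1 (m v2 v3 v1) v0 v1)] at h
    rw [(E625 v1 v2 v3 v0)] at h
    exact h
  have E1119 : ∀ v0 v1 v2 : A, (m v0 v0 v1) = (m v1 v1 (m v1 v2 v0)) := by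
    intro v0 v1 v2
    have h := (E715 v1 v2 v0)
    rw [← (E501 v2 v2 v1)] at h
    rw [(hP1 (m v2 v2 v1) (m v2 v2 v1))] at h
    rw [← (E1109 v0 v1 v2 v2)] at h
    exact h
  have E1165 : ∀ v0 v1 v2 v3 : A, (m v0 v1 v2) = (m v0 (m v2 v3 v1) v2) := by
    intro v0 v1 v2 v3
    have h := (E55 v2 v0 (m v2 v3 v1)).symm
    rw [← (E1119 v1 v2 v3)] at h
    rw [(E357 v2 v0 (m v2 v3 v1))] at h
    rw [(E367 v0 v1 v2)] at h
    exact h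
  have E407 : ∀ v0 v1 v2 v3 : A, (m v0 (m v1 v1 v2) v3) = (m v0 (m v1 v1 (m v3 v3 v2)) v3) := by
    intro v0 v1 v2 v3
    have h := (hP3 v0 v1 (m v3 v3 v2) v3).symm
    rw [(E371 v0 v3 v2)] at h
    rw [← (hP3 v0 v1 v2 v3)] at h
    exact h
  have E1181 : ∀ v0 v1 v2 v3 v4 : A, (m v0 (m v1 v1 v2) v3) = (m v0 (m v1 v1 (m v3 v4 v2)) v3) := by
    intro v0 v1 v2 v3 v4
    have h := (E407 v0 v1 (m v3 v4 v2) v3).symm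
    rw [← (E1119 v2 v3 v4)] at h
    rw [← (E393 v0 v1 v2 v3)] at h
    exact h
  have E1295 : ∀ v0 v1 v2 v3 : A, (m v0 (m v1 v2 v3) v2) = (m v0 v3 v2) := by
    intro v0 v1 v2 v3
    have h := (E1165 v0 v3 v2 v1).symm
    rw [← (E501 v2 v1 v3)] at h
    rw [(E13 v2 v1 v3 (m v1 v2 v3))] at h
    rw [← (E1181 v0 (m v1 v2 v3) v3 v2 v1)] at h
    rw [(E13 v1 v2 v3 v3)] at h
    rw [(E357 v3 v1 v2)] at h
    exact h
  have E589 : ∀ v0 v1 v2 v3 v4 v5 : A, (m (m v0 v1 (m v2 v3 v4)) v4 v5) = (m v5 v5 v4) := by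
    intro v0 v1 v2 v3 v4 v5
    have h := (E573 v0 v1 v4 (m v2 v3 v4) v5)
    rw [(E53 v4 v2 v3)] at h
    rw [(E367 v2 v3 v4)] at h
    exact h
  have E1303 : ∀ v0 v1 v2 : A, (m v0 v0 v1) = (m v0 v0 (m v2 v0 v1)) := by
    intro v0 v1 v2
    have v3 : A := v0
    have h := (E3 v3 (m v2 v0 v1) v0)
    rw [(E1295 (m v3 (m v2 v0 v1) (m v2 v0 v1)) v2 v0 v1)] at h
    rw [(E589 v3 (m v2 v0 v1) v2 v0 v1 v0)] at h
    exact h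
  have E1363 : ∀ v0 v1 v2 : A, (m (m v0 v1 v2) (m v0 v1 v2) (m v1 v1 v2)) = (m v1 v1 v2) := by
    intro v0 v1 v2
    have h := (E357 (m v0 v1 v2) v1 v1)
    rw [← (E1303 v1 v2 v0)] at h
    rw [(E13 v0 v1 v2 (m v1 v1 v2))] at h
    rw [(E13 v1 v1 v2 (m v0 v1 v2))] at h
    rw [(E13 v0 v1 v2 (m v1 v1 v2))] at h
    rw [(E13 v1 v1 v2 (m v0 v1 v2))] at h
    rw [(E13 v0 v1 v2 (m v1 v1 v2))] at h
    rw [(E13 v1 v1 v2 (m v0 v1 v2))] at h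
    rw [(E13 v0 v1 v2 (m v1 v1 v2))] at h
    rw [(E13 v1 v1 v2 (m v0 v1 v2))] at h
    rw [(E13 v0 v1 v2 (m v1 v1 v2))] at h
    rw [(E13 v1 v1 v2 (m v0 v1 v2))] at h
    rw [(E13 v0 v1 v2 (m v1 v1 v2))] at h
    rw [(E13 v1 v1 v2 (m v0 v1 v2))] at h
    rw [(E13 v0 v1 v2 (m v1 v1 v2))] at h
    rw [(E13 v1 v1 v2 (m v0 v1 v2))] at h
    rw [(E13 v0 v1 v2 (m v1 v1 v2))] at h
    rw [(E13 v1 v1 v2 (m v0 v1 v2))] at h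
    rw [(E13 v0 v1 v2 (m v1 v1 v2))] at h
    rw [(E13 v1 v1 v2 (m v0 v1 v2))] at h
    rw [(E13 v0 v1 v2 (m v1 v1 v2))] at h
    rw [(E13 v1 v1 v2 (m v0 v1 v2))] at h
    rw [(E13 v0 v1 v2 (m v1 v1 v2))] at h
    rw [(E13 v1 v1 v2 (m v0 v1 v2))] at h
    rw [(E13 v0 v1 v2 (m v1 v1 v2))] at h
    rw [(E13 v1 v1 v2 (m v0 v1 v2))] at h
    rw [(E13 v0 v1 v2 (m v1 v1 v2))] at h
    rw [(E13 v1 v1 v2 (m v0 v1 v2))] at h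
    rw [(E13 v0 v1 v2 (m v1 v1 v2))] at h
    rw [(E13 v1 v1 v2 (m v0 v1 v2))] at h
    rw [(E13 v0 v1 v2 (m v1 v1 v2))] at h
    rw [(E13 v1 v1 v2 (m v0 v1 v2))] at h
    rw [(E13 v0 v1 v2 (m v1 v1 v2))] at h
    rw [(E13 v1 v1 v2 (m v0 v1 v2))] at h
    rw [(E13 v0 v1 v2 (m v1 v1 v2))] at h
    rw [(E13 v1 v1 v2 (m v0 v1 v2))] at h
    rw [(E13 v0 v1 v2 (m v1 v1 v2))] at h
    rw [(E13 v1 v1 v2 (m v0 v1 v2))] at h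
    rw [(E13 v0 v1 v2 (m v1 v1 v2))] at h
    rw [(E13 v1 v1 v2 (m v0 v1 v2))] at h
    rw [(E13 v0 v1 v2 (m v1 v1 v2))] at h
    rw [(E13 v1 v1 v2 (m v0 v1 v2))] at h
    rw [(E13 v0 v1 v2 (m v1 v1 v2))] at h
    rw [(E13 v1 v1 v2 (m v0 v1 v2))] at h
    rw [(E13 v0 v1 v2 (m v1 v1 v2))] at h
    rw [(E13 v1 v1 v2 (m v0 v1 v2))] at h
    rw [(E13 v0 v1 v2 (m v1 v1 v2))] at h
    rw [(E13 v1 v1 v2 (m v0 v1 v2))] at h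
    rw [(E13 v0 v1 v2 (m v1 v1 v2))] at h
    rw [(E13 v1 v1 v2 (m v0 v1 v2))] at h
    rw [(E13 v0 v1 v2 (m v1 v1 v2))] at h
    rw [(E13 v1 v1 v2 (m v0 v1 v2))] at h
    rw [(E13 v0 v1 v2 (m v1 v1 v2))] at h
    rw [(E13 v1 v1 v2 (m v0 v1 v2))] at h
    rw [(E13 v0 v1 v2 (m v1 v1 v2))] at h
    rw [(E13 v1 v1 v2 (m v0 v1 v2))] at h
    rw [(E13 v0 v1 v2 (m v1 v1 v2))] at h
    rw [(E13 v1 v1 v2 (m v0 v1 v2))] at h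
    rw [(E13 v0 v1 v2 (m v1 v1 v2))] at h
    rw [(E13 v1 v1 v2 (m v0 v1 v2))] at h
    rw [(E13 v0 v1 v2 (m v1 v1 v2))] at h
    rw [(E13 v1 v1 v2 (m v0 v1 v2))] at h
    exact h
  have E1089 : ∀ v0 v1 v2 v3 : A, (m v0 v1 v2) = (m v3 (m v1 v0 v2) (m v0 v1 v2)) := by
    intro v0 v1 v2 v3
    have h := (E57 (m v0 v1 v2) (m v1 v0 v2) v3)
    rw [(E501 v0 v1 v2)] at h
    rw [(E367 v3 (m v1 v0 v2) (m v0 v1 v2))] at h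
    exact h
  have E1425 : ∀ v0 v1 v2 : A, (m v0 v1 v2) = (m v1 v0 v2) := by
    intro v0 v1 v2
    have h := (E399 v1 v0 v2 (m v1 v0 v2)).symm
    rw [← (E1089 v0 v1 v2 (m v1 v0 v2))] at h
    rw [(hP1 (m v1 v0 v2) (m v0 v1 v2))] at h
    exact h
  have E1261 : ∀ v0 v1 v2 v3 : A, (m v0 v0 v1) = (m v2 (m v0 v3 v1) (m v0 v0 v1)) := by
    intro v0 v1 v2 v3
    have h := (E57 (m v0 v3 v1) v0 v2)
    rw [← (E1165 (m v0 v3 v1) v1 v0 v3)] at h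
    rw [(E655 v2 v0 (m v0 v3 v1) (m v0 v3 v1) v1)] at h
    rw [(E335 v0 v3 v1 v0)] at h
    exact h
  have E1459 : ∀ v0 v1 v2 : A, (m (m v0 v0 v1) v2 v1) = (m v2 v0 v1) := by
    intro v0 v1 v2
    have h := (E53 v1 v2 v0).symm
    rw [(E1425 v2 (m v0 v0 v1) v1)] at h
    rw [(E357 v1 v2 v0)] at h
    exact h
  have E1463 : ∀ v0 v1 v2 v3 : A, (m (m v0 v0 (m v1 v1 v2)) v3 v2) = (m v3 (m v0 v0 v1) v2) := by
    intro v0 v1 v2 v3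
    have h := (E393 v3 v0 v1 v2).symm
    rw [(E1425 v3 (m v0 v0 (m v1 v1 v2)) v2)] at h
    exact h
  have E557 : ∀ v0 v1 v2 v3 : A, (m v0 (m v1 v1 v2) (m v3 v3 v1)) = (m v0 v2 (m v3 v3 v1)) := by
    intro v0 v1 v2 v3
    have h := (E95 v0 (m v3 v3 v1) v2).symm
    rw [(E467 v2 v2 v3 v1)] at h
    rw [← (E393 v0 v1 v2 (m v3 v3 v1))] at h
    rw [(E371 v0 (m v3 v3 v1) v2)] at h
    exact h
  have E1311 : ∀ v0 v1 v2 v3 : A, (m v0 (m v1 v2 v3) (m v2 v2 v3)) = (m v2 v2 v3) := by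
    intro v0 v1 v2 v3
    have h := (E1295 v0 v1 (m v2 v2 v3) v3)
    rw [← (E53 v3 v1 v2)] at h
    rw [(E557 v0 v3 (m v1 v2 v3) v2)] at h
    rw [← (E387 v2 v2 v3 v0)] at h
    exact h
  have E1743 : ∀ v0 v1 v2 : A, (m v0 v0 v1) = (m (m v0 v0 v1) (m v0 v0 v1) (m v2 v0 v1)) := by
    intro v0 v1 v2
    have v3 : A := v0
    have h := (E3 v3 (m v2 v0 v1) (m v0 v0 v1))
    rw [(E1311 (m v3 (m v2 v0 v1) (m v2 v0 v1)) v2 v0 v1)] at h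
    rw [(E13 v0 v0 v1 (m v2 v0 v1))] at h
    rw [(E13 v2 v0 v1 (m v0 v0 v1))] at h
    rw [(E13 v0 v0 v1 (m v2 v0 v1))] at h
    rw [(E13 v2 v0 v1 (m v0 v0 v1))] at h
    rw [(E13 v0 v0 v1 (m v2 v0 v1))] at h
    rw [(E13 v2 v0 v1 (m v0 v0 v1))] at h
    rw [(E13 v0 v0 v1 (m v2 v0 v1))] at h
    rw [(E13 v2 v0 v1 (m v0 v0 v1))] at h
    rw [(E13 v0 v0 v1 (m v2 v0 v1))] at h
    rw [(E13 v2 v0 v1 (m v0 v0 v1))] at h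
    rw [(E13 v0 v0 v1 (m v2 v0 v1))] at h
    rw [(E13 v2 v0 v1 (m v0 v0 v1))] at h
    rw [(E13 v0 v0 v1 (m v2 v0 v1))] at h
    rw [(E13 v2 v0 v1 (m v0 v0 v1))] at h
    rw [(E13 v0 v0 v1 (m v2 v0 v1))] at h
    rw [(E13 v2 v0 v1 (m v0 v0 v1))] at h
    rw [(E13 v0 v0 v1 (m v2 v0 v1))] at h
    rw [(E13 v2 v0 v1 (m v0 v0 v1))] at h
    rw [(E13 v0 v0 v1 (m v2 v0 v1))] at h
    rw [(E13 v2 v0 v1 (m v0 v0 v1))] at h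
    rw [(E13 v0 v0 v1 (m v2 v0 v1))] at h
    rw [(E13 v2 v0 v1 (m v0 v0 v1))] at h
    rw [(E13 v0 v0 v1 (m v2 v0 v1))] at h
    rw [(E13 v2 v0 v1 (m v0 v0 v1))] at h
    rw [(E13 v0 v0 v1 (m v2 v0 v1))] at h
    rw [(E13 v2 v0 v1 (m v0 v0 v1))] at h
    rw [(E13 v0 v0 v1 (m v2 v0 v1))] at h
    rw [(E13 v2 v0 v1 (m v0 v0 v1))] at h
    rw [(E13 v0 v0 v1 (m v2 v0 v1))] at h
    rw [(E13 v2 v0 v1 (m v0 v0 v1))] at h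
    rw [(E13 v0 v0 v1 (m v2 v0 v1))] at h
    rw [(E13 v2 v0 v1 (m v0 v0 v1))] at h
    rw [(E13 v0 v0 v1 (m v2 v0 v1))] at h
    rw [(E13 v2 v0 v1 (m v0 v0 v1))] at h
    rw [(E13 v0 v0 v1 (m v2 v0 v1))] at h
    rw [(E13 v2 v0 v1 (m v0 v0 v1))] at h
    rw [(E13 v0 v0 v1 (m v2 v0 v1))] at h
    rw [(E13 v2 v0 v1 (m v0 v0 v1))] at h
    rw [(E13 v0 v0 v1 (m v2 v0 v1))] at h
    rw [(E13 v2 v0 v1 (m v0 v0 v1))] at h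
    rw [(E13 v0 v0 v1 (m v2 v0 v1))] at h
    rw [(E13 v2 v0 v1 (m v0 v0 v1))] at h
    rw [(E13 v0 v0 v1 (m v2 v0 v1))] at h
    rw [(E13 v2 v0 v1 (m v0 v0 v1))] at h
    rw [(E13 v0 v0 v1 (m v2 v0 v1))] at h
    rw [(E13 v2 v0 v1 (m v0 v0 v1))] at h
    rw [(E13 v0 v0 v1 (m v2 v0 v1))] at h
    rw [(E13 v2 v0 v1 (m v0 v0 v1))] at h
    rw [(E13 v0 v0 v1 (m v2 v0 v1))] at h
    rw [(E13 v2 v0 v1 (m v0 v0 v1))] at h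
    rw [(E13 v0 v0 v1 (m v2 v0 v1))] at h
    rw [(E13 v2 v0 v1 (m v0 v0 v1))] at h
    rw [(E13 v0 v0 v1 (m v2 v0 v1))] at h
    rw [(E13 v2 v0 v1 (m v0 v0 v1))] at h
    rw [(E13 v0 v0 v1 (m v2 v0 v1))] at h
    rw [(E13 v2 v0 v1 (m v0 v0 v1))] at h
    rw [(E13 v0 v0 v1 (m v2 v0 v1))] at h
    rw [(E13 v2 v0 v1 (m v0 v0 v1))] at h
    rw [(E13 v0 v0 v1 (m v2 v0 v1))] at h
    rw [(E13 v2 v0 v1 (m v0 v0 v1))] at h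
    exact h
  have E493 : ∀ v0 v1 v2 : A, (m v0 v0 (m v1 v1 v2)) = (m (m v0 v0 (m v1 v1 v2)) (m v0 v0 v1) v2) := by
    intro v0 v1 v2
    have v3 : A := v0
    have h := (E393 (m v3 (m v0 v0 (m v1 v1 v2)) (m v0 v0 (m v1 v1 v2))) v0 v1 v2).symm
    rw [(E3 v3 (m v0 v0 (m v1 v1 v2)) v2)] at h
    rw [(E49 v3 (m v0 v0 (m v1 v1 v2)))] at h
    rw [← (E467 v0 v0 v1 v2)] at h
    exact h
  have ub1 : ∀ x y z : A, (m (m x y z) (m x y z) (m x x z)) = (m x x z) := by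
    intro x y z
    conv_lhs => rw [← (E1261 x z (m x y z) y)]
    all_goals rfl
  have absorb : ∀ x y z : A, (m (m x x z) (m y y z) z) = (m x y z) := by
    intro x y z
    conv_lhs => rw [(E1459 x z (m y y z))]
    conv_rhs => rw [← (E1459 y z x)]
    all_goals rfl
  have H1 : ∀ w x z : A, (m (m w w x) w z) = (m w w z) := by
    intro w x z
    conv_lhs => rw [(E337 w x z)]
    conv_rhs => rw [(E11 w z)]
    all_goals rfl
  have assoc : ∀ x y z : A, (m (m x x y) (m x x y) z) = (m x x (m y y z)) := by
    intro x y z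
    conv_lhs => rw [← (E1463 x y z (m x x y))]
    conv_rhs => rw [(E493 x y z)]
    all_goals rfl
  have H2 : ∀ w y z : A, (m (m w w z) (m w w z) (m y w z)) = (m w w z) := by
    intro w y z
    conv_lhs => rw [← (E1743 w z y)]
    all_goals rfl
  -- aliases: comm=E11 zle=E357 ub2=E1363 fcomm=E1425
  have P4 : ∀ x y z w : A, m x x (m y z w) = m (m x x y) (m x x z) w := by
    intro x y z w
    have h := hP3 (m x x y) x z w
    rw [H1 x y w] at h
    rw [E1425 (m x x y) z w] at h
    rw [hP3 z x y w] at h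
    rw [← assoc (m x x w) (m z x w) (m z y w)] at h
    rw [H2 x z w] at h
    rw [assoc x w (m z y w)] at h
    rw [E357 w z y] at h
    rw [E1425 z y w] at h
    exact h.symm
  intro a b c hc
  obtain ⟨hca, hcb, hglb⟩ := hc
  have hca' : m c c a = a := hca
  have hcb' : m c c b = b := hcb
  have hM' : ∀ x y z, box (m x y z) = m (box (m x x z)) (box (m y y z)) (box z) := hM
  have hac : m a a c = a := by rw [E11 a c]; exact hca'
  have hbc : m b b c = b := by rw [E11 b c]; exact hcb'
  have h1 : m (m a b c) (m a b c) a = a := by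
    have t := ub1 a b c; rw [hac] at t; exact t
  have h2 : m (m a b c) (m a b c) b = b := by
    have t := E1363 a b c; rw [hbc] at t; exact t
  have h3 : m (m a b c) (m a b c) c = c := hglb (m a b c) h1 h2
  have habc : m a b c = c := by
    have t := E357 c a b
    rw [E11 c (m a b c)] at t
    rw [h3] at t
    exact t.symm
  have hboxc : box c = m (box a) (box b) (box c) := by
    have t := hM' a b c
    rw [hac, hbc, habc] at t
    exact t
  have hXa : box a = m (box a) (box a) (box c) := by
    have t := hM' a a c; rw [hac] at t; exact t
  have hXb : box b = m (box b) (box b) (box c) := by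
    have t := hM' b b c; rw [hbc] at t; exact t
  refine ⟨?_, ?_, ?_⟩
  · show m (box c) (box c) (box a) = box a
    rw [E11 (box c) (box a)]; exact hXa.symm
  · show m (box c) (box c) (box b) = box b
    rw [E11 (box c) (box b)]; exact hXb.symm
  · intro w hwa hwb
    have hwa' : m w w (box a) = box a := hwa
    have hwb' : m w w (box b) = box b := hwb
    show m w w (box c) = box c
    have t := P4 w (box a) (box b) (box c)
    rw [hwa', hwb'] at t
    rw [← hboxc] at t
    exact t
end

section
/- In a distributive nearlattice A, a subset of the form {a ∈ A : a = b₁ ∧ ⋯ ∧ b_k for some b₁,…,b_k ≥ some elements of a nonempty finite set X} is closed under the operation c ↦ m(a,b,c): if a, b are in the filter generated by X and c ∈ A is arbitrary, then m(a,b,c) is in the filter generated by X. -/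
variable {A : Type*}

/-- The filter generated by a nonempty `X` in a distributive nearlattice is closed
under `(a,b) ↦ m a b c` for every `c`. -/
theorem stmt19 (m : A → A → A → A) (h : IsDN m) (X : Set A) (hX : X.Nonempty)
    (a b : A)
    (ha : ∀ F : Set A, IsFilter m F → X ⊆ F → a ∈ F)
    (hb : ∀ F : Set A, IsFilter m F → X ⊆ F → b ∈ F) :
    ∀ c, ∀ F : Set A, IsFilter m F → X ⊆ F → m a b c ∈ F := by
  obtain ⟨⟨hP1, hP2⟩, hP3⟩ := h
  have hc : ∀ a b, (m a a b) = (m b b a) := by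
    intro a b
    have e0 : (m a a b) = (m (m a a a) a b) := (congrArg (fun t => m t a b) (hP1 a a).symm)
    have e1 : (m (m a a a) a b) = (m (m a a a) (m a a a) b) := (congrArg (fun t => m (m a a a) t b) (hP1 a a).symm)
    have e2 : (m (m a a a) (m a a a) b) = (m (m a a a) (m a (m a a a) a) b) := (congrArg (fun t => m (m a a a) t b) (congrArg (fun t => m a t a) (hP1 a a).symm))
    have e3 : (m (m a a a) (m a (m a a a) a) b) = (m b b (m a (m a a a) a)) := (hP2 a a a a b)
    have e4 : (m b b (m a (m a a a) a)) = (m b b (m a a a)) := (congrArg (fun t => m b b t) (congrArg (fun t => m a t a) (hP1 a a)))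
    have e5 : (m b b (m a a a)) = (m b b a) := (congrArg (fun t => m b b t) (hP1 a a))
    exact (e0.trans (e1.trans (e2.trans (e3.trans (e4.trans e5)))))
  have h8 : ∀ a c, (m a c c) = c := by
    intro a c
    have e0 : (m a c c) = (m (m a c c) c (m a c c)) := (hP1 (m a c c) c).symm
    have e1 : (m (m a c c) c (m a c c)) = (m (m a c c) (m c c c) (m a c c)) := (congrArg (fun t => m (m a c c) t (m a c c)) (hP1 c c).symm)
    have e2 : (m (m a c c) (m c c c) (m a c c)) = (m (m a c c) (m c (m c a c) c) (m a c c)) := (congrArg (fun t => m (m a c c) t (m a c c)) (congrArg (fun t => m c t c) (hP1 c a).symm))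
    have e3 : (m (m a c c) (m c (m c a c) c) (m a c c)) = (m (m a c c) (m a c c) (m c (m a c c) c)) := (hP2 a c c c (m a c c))
    have e4 : (m (m a c c) (m a c c) (m c (m a c c) c)) = (m (m a c c) (m a c c) c) := (congrArg (fun t => m (m a c c) (m a c c) t) (hP1 c (m a c c)))
    have e5 : (m (m a c c) (m a c c) c) = (m c c (m a c c)) := (hc c (m a c c)).symm
    have e6 : (m c c (m a c c)) = (m c c (m a (m c c c) c)) := (congrArg (fun t => m c c t) (congrArg (fun t => m a t c) (hP1 c c).symm))
    have e7 : (m c c (m a (m c c c) c)) = (m (m c a c) (m a (m c c c) c) c) := (hP2 c a c c c).symm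
    have e8 : (m (m c a c) (m a (m c c c) c) c) = (m (m c a c) (m a c c) c) := (congrArg (fun t => m (m c a c) t c) (congrArg (fun t => m a t c) (hP1 c c)))
    have e9 : (m (m c a c) (m a c c) c) = (m c (m a c c) c) := (congrArg (fun t => m t (m a c c) c) (hP1 c a))
    have e10 : (m c (m a c c) c) = c := (hP1 c (m a c c))
    exact (e0.trans (e1.trans (e2.trans (e3.trans (e4.trans (e5.trans (e6.trans (e7.trans (e8.trans (e9.trans e10))))))))))
  have h10 : ∀ a b c f, (m (m a b c) c f) = (m f f c) := by
    intro a b c f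
    have e0 : (m (m a b c) c f) = (m (m a b c) (m b c c) f) := (congrArg (fun t => m (m a b c) t f) (h8 b c).symm)
    have e1 : (m (m a b c) (m b c c) f) = (m (m a b c) (m b (m c a c) c) f) := (congrArg (fun t => m (m a b c) t f) (congrArg (fun t => m b t c) (hP1 c a).symm))
    have e2 : (m (m a b c) (m b (m c a c) c) f) = (m f f (m b (m a c c) c)) := (hP2 a b c c f)
    have e3 : (m f f (m b (m a c c) c)) = (m f f (m b c c)) := (congrArg (fun t => m f f t) (congrArg (fun t => m b t c) (h8 a c)))
    have e4 : (m f f (m b c c)) = (m f f c) := (congrArg (fun t => m f f t) (h8 b c))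
    exact (e0.trans (e1.trans (e2.trans (e3.trans e4))))
  have h11 : ∀ a b c, (m c c (m a b c)) = (m a b c) := by
    intro a b c
    have e0 : (m c c (m a b c)) = (m (m a b c) (m a b c) c) := (hc c (m a b c))
    have e1 : (m (m a b c) (m a b c) c) = (m (m a b c) c (m a b c)) := (h10 a b c (m a b c)).symm
    have e2 : (m (m a b c) c (m a b c)) = (m a b c) := (hP1 (m a b c) c)
    exact (e0.trans (e1.trans e2))
  have hSS : ∀ a b c, (m a (m b b c) c) = (m c c (m a b c)) := by
    intro a b c
    have e0 : (m a (m b b c) c) = (m (m a b c) (m a b c) (m a c c)) := (hP3 a b c c)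
    have e1 : (m (m a b c) (m a b c) (m a c c)) = (m (m a b c) (m a b c) c) := (congrArg (fun t => m (m a b c) (m a b c) t) (h8 a c))
    have e2 : (m (m a b c) (m a b c) c) = (m c c (m a b c)) := (hc c (m a b c)).symm
    exact (e0.trans (e1.trans e2))
  have h12 : ∀ a b c f, (m (m a b c) (m b a c) f) = (m f f (m b a c)) := by
    intro a b c f
    have e0 : (m (m a b c) (m b a c) f) = (m (m a b c) (m c c (m b a c)) f) := (congrArg (fun t => m (m a b c) t f) (h11 b a c).symm)
    have e1 : (m (m a b c) (m c c (m b a c)) f) = (m (m a b c) (m b (m a a c) c) f) := (congrArg (fun t => m (m a b c) t f) (hSS b a c).symm)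
    have e2 : (m (m a b c) (m b (m a a c) c) f) = (m f f (m b (m a a c) c)) := (hP2 a b c a f)
    have e3 : (m f f (m b (m a a c) c)) = (m f f (m c c (m b a c))) := (congrArg (fun t => m f f t) (hSS b a c))
    have e4 : (m f f (m c c (m b a c))) = (m f f (m b a c)) := (congrArg (fun t => m f f t) (h11 b a c))
    exact (e0.trans (e1.trans (e2.trans (e3.trans e4))))
  have h13 : ∀ a b c, m a b c = m b a c := by
    intro a b c
    have e0 : m a b c = m (m a b c) (m b a c) (m a b c) := (hP1 (m a b c) (m b a c)).symm
    have e1 : m (m a b c) (m b a c) (m a b c) = m (m a b c) (m a b c) (m b a c) := h12 a b c (m a b c)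
    have e2 : m (m a b c) (m a b c) (m b a c) = m (m b a c) (m b a c) (m a b c) := hc (m a b c) (m b a c)
    have e3 : m (m b a c) (m b a c) (m a b c) = m (m b a c) (m a b c) (m b a c) := (h12 b a c (m b a c)).symm
    have e4 : m (m b a c) (m a b c) (m b a c) = m b a c := hP1 (m b a c) (m a b c)
    exact e0.trans (e1.trans (e2.trans (e3.trans e4)))
  have hT3 : ∀ a b, (m a a (m a a b)) = (m a a b) := by
    intro a b
    have e0 : (m a a (m a a b)) = (m a a (m b b a)) := (congrArg (fun t => m a a t) (hc a b))
    have e1 : (m a a (m b b a)) = (m b b a) := (h11 b b a)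
    have e2 : (m b b a) = (m a a b) := (hc a b).symm
    exact (e0.trans (e1.trans e2))
  have h9 : ∀ a b f, (m (m a a b) b f) = (m f f b) := by
    intro a b f
    have e0 : (m (m a a b) b f) = (m f f b) := (h10 a a b f)
    exact e0
  have hT4 : ∀ a b c, (m (m a b c) (m a b c) (m a a c)) = (m a a c) := by
    intro a b c
    have e0 : (m (m a b c) (m a b c) (m a a c)) = (m a (m b b a) c) := (hP3 a b a c).symm
    have e1 : (m a (m b b a) c) = (m (m b b a) a c) := (h13 a (m b b a) c)
    have e2 : (m (m b b a) a c) = (m c c a) := (h10 b b a c)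
    have e3 : (m c c a) = (m a a c) := (hc a c).symm
    exact (e0.trans (e1.trans (e2.trans e3)))
  have hIeq : ∀ a b c, (m (m a a c) (m b b c) c) = (m a b c) := by
    intro a b c
    have e0 : (m (m a a c) (m b b c) c) = (m c c (m (m a a c) b c)) := (hSS (m a a c) b c)
    have e1 : (m c c (m (m a a c) b c)) = (m (m a a c) b c) := (h11 (m a a c) b c)
    have e2 : (m (m a a c) b c) = (m b (m a a c) c) := (h13 (m a a c) b c)
    have e3 : (m b (m a a c) c) = (m c c (m b a c)) := (hSS b a c)
    have e4 : (m c c (m b a c)) = (m b a c) := (h11 b a c)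
    have e5 : (m b a c) = (m a b c) := (h13 a b c).symm
    exact (e0.trans (e1.trans (e2.trans (e3.trans (e4.trans e5)))))
  have htrans : ∀ a b c, m a a b = b → m b b c = c → m a a c = c := by
    intro a b c ht1 ht2
    have e0 : (m a a c) = (m c c a) := (hc a c)
    have e1 : (m c c a) = (m (m b b a) a c) := (h10 b b a c).symm
    have e2 : (m (m b b a) a c) = (m (m a a b) a c) := (congrArg (fun t => m t a c) (hc a b).symm)
    have e3 : (m (m a a b) a c) = (m b a c) := (congrArg (fun t => m t a c) ht1)
    have e4 : (m b a c) = (m a b c) := (h13 a b c).symm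
    have e5 : (m a b c) = (m c c (m a b c)) := (h11 a b c).symm
    have e6 : (m c c (m a b c)) = (m a (m b b c) c) := (hSS a b c).symm
    have e7 : (m a (m b b c) c) = (m a c c) := (congrArg (fun t => m a t c) ht2)
    have e8 : (m a c c) = c := (h8 a c)
    exact (e0.trans (e1.trans (e2.trans (e3.trans (e4.trans (e5.trans (e6.trans (e7.trans e8))))))))
  have hs : ∀ v u p z, m u u p = p → m (m v u z) (m v u z) (m v p z) = m v p z := by
    intro v u p z hu
    exact (hP3 v u p z).symm.trans (congrArg (fun t => m v t z) hu)
  intro c F hF hXF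
  obtain ⟨hne, hup, hmeet⟩ := hF
  have haF := ha F ⟨hne, hup, hmeet⟩ hXF
  have hbF := hb F ⟨hne, hup, hmeet⟩ hXF
  have hpF : m a a c ∈ F := hup a (m a a c) haF (hT3 a c)
  have hrF : m b b c ∈ F := hup b (m b b c) hbF (hT3 b c)
  refine hmeet (m a a c) (m b b c) (m a b c) hpF hrF ⟨hT4 a b c, ?_, ?_⟩
  · show m (m a b c) (m a b c) (m b b c) = m b b c
    calc m (m a b c) (m a b c) (m b b c)
        = m (m b a c) (m b a c) (m b b c) := by rw [h13 a b c]
      _ = m b b c := hT4 b a c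
  · intro w hw1 hw2
    show m w w (m a b c) = m a b c
    have hw1' : m w w (m a a c) = m a a c := hw1
    have hw2' : m w w (m b b c) = m b b c := hw2
    have s1 : m w w (m w w c) = m w w c := hT3 w c
    have s2 : m (m w w c) (m w w c) (m w (m b b c) c) = m w (m b b c) c := hs w w (m b b c) c hw2'
    have s3 : m (m w (m b b c) c) (m w (m b b c) c) (m (m a a c) (m b b c) c)
        = m (m a a c) (m b b c) c := by
      have t1 := hs (m b b c) w (m a a c) c hw1'
      calc m (m w (m b b c) c) (m w (m b b c) c) (m (m a a c) (m b b c) c)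
          = m (m (m b b c) w c) (m (m b b c) w c) (m (m b b c) (m a a c) c) := by
            rw [h13 w (m b b c) c, h13 (m a a c) (m b b c) c]
        _ = m (m b b c) (m a a c) c := t1
        _ = m (m a a c) (m b b c) c := h13 (m b b c) (m a a c) c
    have s4 : m w w (m w (m b b c) c) = m w (m b b c) c :=
      htrans w (m w w c) (m w (m b b c) c) s1 s2
    have s5 : m w w (m (m a a c) (m b b c) c) = m (m a a c) (m b b c) c :=
      htrans w (m w (m b b c) c) (m (m a a c) (m b b c) c) s4 s3
    rw [hIeq a b c] at s5
    exact s5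
end
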